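/- Let S be a semigroup satisfying conditions (A), (B), (C), let Q be the semigroup of ~-classes of Σ (an inverse semigroup with [a,b]⁻¹ = [b,a]), and let θ: S → Q be the embedding aθ = [x, xa] for any x ∈ S with l(x) = r(a). Then every element of Q can be written as (aθ)⁻¹(bθ) for some a, b ∈ S; indeed [a,b] = (aθ)⁻¹(bθ) for every [a,b] ∈ Q, so θ(S) is a left I-order in Q. -/

import Mathlib

/-- The bicyclic semigroup `𝓑` carried by `ℕ × ℕ`, an element being `(r, l)`;
`(m,n)(p,q) = (m - n + t, q - p + t)` with `t = max n p`. -/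
structure Bicyclic where
  r : ℕ
  l : ℕ

instance : Mul Bicyclic :=
  ⟨fun x y => ⟨x.r + (max x.l y.r - x.l), y.l + (max x.l y.r - y.r)⟩⟩

/-- The inverse `(m,n)⁻¹ = (n,m)` in the bicyclic semigroup. -/
def Bicyclic.inv (x : Bicyclic) : Bicyclic := ⟨x.l, x.r⟩

/-- `T` is a left I-order in the bicyclic semigroup `𝓑`. -/
def IsLeftIOrderBic (T : Set Bicyclic) : Prop :=
  ∀ q : Bicyclic, ∃ a ∈ T, ∃ b ∈ T, q = a.inv * b

/-- `r a`, the first coordinate of `φ a` in `𝓑`. -/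
def rr {S : Type*} [Mul S] (φ : S →ₙ* Bicyclic) (a : S) : ℕ := (φ a).r

/-- `l a`, the second coordinate of `φ a` in `𝓑`. -/
def ll {S : Type*} [Mul S] (φ : S →ₙ* Bicyclic) (a : S) : ℕ := (φ a).l

/-- Condition (A): the image of `φ` is a left I-order in `𝓑`. -/
def CondA {S : Type*} [Mul S] (φ : S →ₙ* Bicyclic) : Prop :=
  IsLeftIOrderBic (Set.range (⇑φ))

/-- Condition (B)(i): if `l x, l y ≥ r a` and `x * a = y * a` then `x = y`. -/
def CondBi {S : Type*} [Mul S] (φ : S →ₙ* Bicyclic) : Prop :=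
  ∀ x y a : S, rr φ a ≤ ll φ x → rr φ a ≤ ll φ y → x * a = y * a → x = y

/-- Condition (B)(ii): if `r x, r y ≥ l a` and `a * x = a * y` then `x = y`. -/
def CondBii {S : Type*} [Mul S] (φ : S →ₙ* Bicyclic) : Prop :=
  ∀ x y a : S, ll φ a ≤ rr φ x → ll φ a ≤ rr φ y → a * x = a * y → x = y

/-- Condition (C): for all `b c` there are `x y` with `x * b = y * c`,
`r x = r y`, `l x = r b - l b + max (l b) (l c)` and
`l y = r c - l c + max (l b) (l c)`. -/
def CondC {S : Type*} [Mul S] (φ : S →ₙ* Bicyclic) : Prop :=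
  ∀ b c : S, ∃ x y : S, x * b = y * c ∧ rr φ x = rr φ y ∧
    ll φ x = rr φ b + (max (ll φ b) (ll φ c) - ll φ b) ∧
    ll φ y = rr φ c + (max (ll φ b) (ll φ c) - ll φ c)

/-- `Σ = {(a,b) ∈ S × S : r a = r b}`. -/
abbrev Sig {S : Type*} [Mul S] (φ : S →ₙ* Bicyclic) : Type _ :=
  {p : S × S // rr φ p.1 = rr φ p.2}

/-- The relation `∼` on pairs: `(a,b) ∼ (c,d)` iff there are `x y` with
`x * a = y * c`, `x * b = y * d`, `l x = r a`, `l y = r c`, `r x = r y`. -/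
def simP {S : Type*} [Mul S] (φ : S →ₙ* Bicyclic) (p q : S × S) : Prop :=
  ∃ x y : S, x * p.1 = y * q.1 ∧ x * p.2 = y * q.2 ∧
    ll φ x = rr φ p.1 ∧ ll φ y = rr φ q.1 ∧ rr φ x = rr φ y

/-- The relation `∼` on `Σ`. -/
def sim {S : Type*} [Mul S] (φ : S →ₙ* Bicyclic) (p q : Sig φ) : Prop :=
  simP φ p.1 q.1

theorem rr_mul {S : Type*} [Mul S] (φ : S →ₙ* Bicyclic) (x a : S) :
    rr φ (x * a) = rr φ x + (max (ll φ x) (rr φ a) - ll φ x) := by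
  simp only [rr, ll, map_mul]; rfl

theorem rr_mul_eq {S : Type*} [Mul S] (φ : S →ₙ* Bicyclic) {x a : S}
    (h : rr φ a ≤ ll φ x) : rr φ (x * a) = rr φ x := by
  have h1 := rr_mul φ x a
  have h2 : max (ll φ x) (rr φ a) = ll φ x := max_eq_left h
  omega

theorem sig_mul_ok {S : Type*} [Mul S] (φ : S →ₙ* Bicyclic) {a b c d x y : S}
    (hab : rr φ a = rr φ b) (hcd : rr φ c = rr φ d)
    (hx : ll φ x = rr φ b + (max (ll φ b) (ll φ c) - ll φ b))
    (hy : ll φ y = rr φ c + (max (ll φ b) (ll φ c) - ll φ c))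
    (hr : rr φ x = rr φ y) : rr φ (x * a) = rr φ (y * d) := by
  have h1 := rr_mul_eq φ (x := x) (a := a)
    (by have := le_max_left (ll φ b) (ll φ c); omega)
  have h2 := rr_mul_eq φ (x := y) (a := d)
    (by have := le_max_right (ll φ b) (ll φ c); omega)
  omega

/-- The set `Q` of `∼`-classes of `Σ`. -/
def QT {S : Type*} [Mul S] (φ : S →ₙ* Bicyclic) : Type _ := Quot (sim φ)

/-- The `∼`-class `[a,b]` of an element of `Σ`. -/
def cls {S : Type*} [Mul S] (φ : S →ₙ* Bicyclic) (p : Sig φ) : QT φ :=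
  Quot.mk _ p

/-- Packaging `(a, b)` with `r a = r b` as an element of `Σ`. -/
def mkSig {S : Type*} [Mul S] (φ : S →ₙ* Bicyclic) (a b : S)
    (h : rr φ a = rr φ b) : Sig φ := ⟨(a, b), h⟩

/-- A chosen witness `x` from condition (C) applied to `b, c`. -/
noncomputable def cx {S : Type*} [Mul S] {φ : S →ₙ* Bicyclic} (hC : CondC φ)
    (b c : S) : S := (hC b c).choose

/-- A chosen witness `y` from condition (C) applied to `b, c`. -/
noncomputable def cy {S : Type*} [Mul S] {φ : S →ₙ* Bicyclic} (hC : CondC φ)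
    (b c : S) : S := (hC b c).choose_spec.choose

theorem c_spec {S : Type*} [Mul S] {φ : S →ₙ* Bicyclic} (hC : CondC φ) (b c : S) :
    cx hC b c * b = cy hC b c * c ∧ rr φ (cx hC b c) = rr φ (cy hC b c) ∧
    ll φ (cx hC b c) = rr φ b + (max (ll φ b) (ll φ c) - ll φ b) ∧
    ll φ (cy hC b c) = rr φ c + (max (ll φ b) (ll φ c) - ll φ c) :=
  (hC b c).choose_spec.choose_spec

/-- Representative-level multiplication: `(a,b) · (c,d) = (x * a, y * d)` where
`x, y` are the witnesses from condition (C) for `b, c`. -/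
noncomputable def pairMul {S : Type*} [Mul S] {φ : S →ₙ* Bicyclic} (hC : CondC φ)
    (p q : Sig φ) : Sig φ :=
  ⟨(cx hC p.1.2 q.1.1 * p.1.1, cy hC p.1.2 q.1.1 * q.1.2),
    sig_mul_ok φ p.2 q.2 (c_spec hC p.1.2 q.1.1).2.2.1
      (c_spec hC p.1.2 q.1.1).2.2.2 (c_spec hC p.1.2 q.1.1).2.1⟩

/-- The multiplication `[a,b][c,d] = [x*a, y*d]` on the set `Q` of `∼`-classes. -/
noncomputable def qmul {S : Type*} [Mul S] {φ : S →ₙ* Bicyclic} (hC : CondC φ)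
    (u v : QT φ) : QT φ :=
  cls φ (pairMul hC (Quot.out u) (Quot.out v))

theorem ll_cx_self {S : Type*} [Mul S] {φ : S →ₙ* Bicyclic} (hC : CondC φ)
    (a : S) : ll φ (cx hC a a) = rr φ a := by
  have h := (c_spec hC a a).2.2.1
  have h2 : max (ll φ a) (ll φ a) = ll φ a := max_self _
  omega

/-- The embedding `θ : S → Q`, `a θ = [x, x*a]` for a chosen `x` with `l x = r a`. -/
noncomputable def theta {S : Type*} [Mul S] {φ : S →ₙ* Bicyclic} (hC : CondC φ)
    (a : S) : QT φ :=
  cls φ ⟨(cx hC a a, cx hC a a * a), (rr_mul_eq φ (ll_cx_self hC a).ge).symm⟩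

/-- The inverse `[a,b]⁻¹ = [b,a]` on `Q`. -/
noncomputable def qinv {S : Type*} [Mul S] {φ : S →ₙ* Bicyclic} (u : QT φ) :
    QT φ :=
  cls φ ⟨((Quot.out u).1.2, (Quot.out u).1.1), (Quot.out u).2.symm⟩

/-! If `l z = r a` then `(a, b) ∼ (z a, z b)`, and `(a, b) ∼ (c, d)` says exactly that the two
pairs have such a common left multiple. Replacing a factor of `[a,b][c,d]` by a left multiple
only changes the pair `(x, y)` taken from (C), so the product is well defined once its class is
known not to depend on that pair: for two pairs `(x, y)`, `(x', y')`, condition (C) for `x, x'`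
gives `u x = v x'`, and (B)(i) cancels `c` from `u y c = u x b = v x' b = v y' c`. Finally
`(aθ)⁻¹(bθ) = [x a, x][x', x' b]` is computed with a pair `(X, Y)` from (C) for `x, x'`, and
`(X x a, Y x' b) = ((X x) a, (X x) b)` is a left multiple of `(a, b)`. -/

section Mul

variable {S : Type*} [Mul S] {φ : S →ₙ* Bicyclic}

theorem ll_mul (φ : S →ₙ* Bicyclic) (x a : S) :
    ll φ (x * a) = ll φ a + (max (ll φ x) (rr φ a) - rr φ a) := by
  simp only [ll, rr, map_mul]; rfl

theorem ll_mul_of_le {x a : S} (h : ll φ x ≤ rr φ a) : ll φ (x * a) = ll φ a := by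
  rw [ll_mul, max_eq_right h]; omega

def IsCWitness (φ : S →ₙ* Bicyclic) (b c x y : S) : Prop :=
  x * b = y * c ∧ rr φ x = rr φ y ∧
    ll φ x = rr φ b + (max (ll φ b) (ll φ c) - ll φ b) ∧
    ll φ y = rr φ c + (max (ll φ b) (ll φ c) - ll φ c)

theorem isCWitness_cx_cy (hC : CondC φ) (b c : S) :
    IsCWitness φ b c (cx hC b c) (cy hC b c) :=
  c_spec hC b c

theorem simP_of_mul_eq {a b c d x y : S} (hx : ll φ x = rr φ a) (hy : ll φ y = rr φ c)
    (h₁ : x * a = y * c) (h₂ : x * b = y * d) : simP φ (a, b) (c, d) := by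
  refine ⟨x, y, h₁, h₂, hx, hy, ?_⟩
  rw [← rr_mul_eq φ hx.ge, ← rr_mul_eq φ hy.ge, h₁]

theorem simP_refl (hC : CondC φ) (p : S × S) : simP φ p p :=
  simP_of_mul_eq (ll_cx_self hC p.1) (ll_cx_self hC p.1) rfl rfl

theorem simP_symm {p q : S × S} (h : simP φ p q) : simP φ q p := by
  obtain ⟨x, y, h₁, h₂, hx, hy, hr⟩ := h
  exact ⟨y, x, h₁.symm, h₂.symm, hy, hx, hr.symm⟩

def Sig.swap (p : Sig φ) : Sig φ := ⟨(p.1.2, p.1.1), p.2.symm⟩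

theorem sim_swap {p q : Sig φ} (h : sim φ p q) : sim φ p.swap q.swap := by
  obtain ⟨x, y, h₁, h₂, hx, hy, hr⟩ := h
  exact ⟨x, y, h₂, h₁, p.2 ▸ hx, q.2 ▸ hy, hr⟩

def Sig.mulLeft (p : Sig φ) (z : S) (hz : ll φ z = rr φ p.1.1) : Sig φ :=
  ⟨(z * p.1.1, z * p.1.2), by rw [rr_mul_eq φ hz.ge, rr_mul_eq φ (p.2 ▸ hz.ge)]⟩

noncomputable def thetaRep (hC : CondC φ) (a : S) : Sig φ :=
  ⟨(cx hC a a, cx hC a a * a), (rr_mul_eq φ (ll_cx_self hC a).ge).symm⟩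

end Mul

section Semigroup

variable {S : Type*} [Semigroup S] {φ : S →ₙ* Bicyclic}

theorem simP_trans (hC : CondC φ) {p q r : S × S} (h₁ : simP φ p q) (h₂ : simP φ q r) :
    simP φ p r := by
  obtain ⟨x, y, hxy₁, hxy₂, hx, hy, hrxy⟩ := h₁
  obtain ⟨u, v, huv₁, huv₂, hu, hv, hruv⟩ := h₂
  obtain ⟨hst, -, hs, ht⟩ := isCWitness_cx_cy hC y u
  set s := cx hC y u
  set t := cy hC y u
  -- `l y = l u = r q.1`, so (C) gives `l s = r y = r x` and `l t = r u = r v`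
  have hs' : ll φ s ≤ rr φ x := by omega
  have ht' : ll φ t ≤ rr φ v := by omega
  have key : ∀ g g' g'' : S, x * g = y * g' → u * g' = v * g'' → s * x * g = t * v * g'' := by
    intro g g' g'' e₁ e₂
    rw [mul_assoc, e₁, ← mul_assoc, hst, mul_assoc, e₂, mul_assoc]
  exact simP_of_mul_eq (by rw [ll_mul_of_le hs', hx]) (by rw [ll_mul_of_le ht', hv])
    (key _ _ _ hxy₁ huv₁) (key _ _ _ hxy₂ huv₂)

theorem simP_mul_left (hC : CondC φ) {a b z : S} (hz : ll φ z = rr φ a) :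
    simP φ (a, b) (z * a, z * b) := by
  have hy := ll_cx_self hC z
  exact simP_of_mul_eq (x := cx hC z z * z) (by rw [ll_mul_of_le hy.le, hz])
    (hy.trans (rr_mul_eq φ hz.ge).symm) (mul_assoc _ _ _) (mul_assoc _ _ _)

theorem sim_mulLeft (hC : CondC φ) (p : Sig φ) {z : S} (hz : ll φ z = rr φ p.1.1) :
    sim φ p (p.mulLeft z hz) :=
  simP_mul_left hC hz

theorem sim_equivalence (hC : CondC φ) : Equivalence (sim φ) :=
  ⟨fun p => simP_refl hC p.1, simP_symm, simP_trans hC⟩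

theorem cls_eq_iff (hC : CondC φ) {p q : Sig φ} : cls φ p = cls φ q ↔ sim φ p q :=
  (Quot.eq (r := sim φ)).trans (sim_equivalence hC).eqvGen_iff

theorem sim_out_cls (hC : CondC φ) (p : Sig φ) : sim φ (cls φ p).out p :=
  (cls_eq_iff hC).mp (Quot.out_eq (cls φ p))

theorem IsCWitness.mul_left {b c x y z : S} (hw : IsCWitness φ (z * b) c x y)
    (hz : ll φ z = rr φ b) : IsCWitness φ b c (x * z) y := by
  rw [IsCWitness, rr_mul_eq φ hz.ge, ll_mul_of_le hz.le] at hw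
  obtain ⟨hxy, hr, hx, hy⟩ := hw
  have hzx : rr φ z ≤ ll φ x := by omega
  refine ⟨by rw [mul_assoc, hxy], by rw [rr_mul_eq φ hzx, hr], ?_, hy⟩
  rw [ll_mul, hz]; omega

theorem IsCWitness.mul_right {b c x y z : S} (hw : IsCWitness φ b (z * c) x y)
    (hz : ll φ z = rr φ c) : IsCWitness φ b c x (y * z) := by
  rw [IsCWitness, rr_mul_eq φ hz.ge, ll_mul_of_le hz.le] at hw
  obtain ⟨hxy, hr, hx, hy⟩ := hw
  have hzy : rr φ z ≤ ll φ y := by omega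
  refine ⟨by rw [mul_assoc, hxy], by rw [rr_mul_eq φ hzy, hr], hx, ?_⟩
  rw [ll_mul, hz]; omega

theorem simP_of_isCWitness (hBi : CondBi φ) (hC : CondC φ) {a b c d x y x' y' : S}
    (hab : rr φ a = rr φ b) (hw : IsCWitness φ b c x y) (hw' : IsCWitness φ b c x' y') :
    simP φ (x * a, y * d) (x' * a, y' * d) := by
  obtain ⟨hxy, -, hx, hy⟩ := hw
  obtain ⟨hxy', -, hx', hy'⟩ := hw'
  obtain ⟨huv, -, hu, hv⟩ := isCWitness_cx_cy hC x x'
  set u := cx hC x x'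
  set v := cy hC x x'
  have huy : u * y = v * y' := by
    refine hBi _ _ c ?_ ?_ ?_
    · rw [ll_mul]; omega
    · rw [ll_mul]; omega
    · rw [mul_assoc, ← hxy, ← mul_assoc, huv, mul_assoc, hxy', mul_assoc]
  refine simP_of_mul_eq ?_ ?_ (by rw [← mul_assoc, huv, mul_assoc])
    (by rw [← mul_assoc, huy, mul_assoc])
  · rw [rr_mul_eq φ (by omega)]; omega
  · rw [rr_mul_eq φ (by omega)]; omega

theorem sim_pairMul_mulLeft_left (hBi : CondBi φ) (hC : CondC φ) (p q : Sig φ) {z : S}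
    (hz : ll φ z = rr φ p.1.1) : sim φ (pairMul hC p q) (pairMul hC (p.mulLeft z hz) q) := by
  obtain ⟨⟨a, b⟩, hab⟩ := p
  have hw := (isCWitness_cx_cy hC (z * b) q.1.1).mul_left (hz.trans hab)
  have h := simP_of_isCWitness hBi hC (d := q.1.2) hab (isCWitness_cx_cy hC b q.1.1) hw
  rwa [mul_assoc] at h

theorem sim_pairMul_mulLeft_right (hBi : CondBi φ) (hC : CondC φ) (p q : Sig φ) {z : S}
    (hz : ll φ z = rr φ q.1.1) : sim φ (pairMul hC p q) (pairMul hC p (q.mulLeft z hz)) := by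
  obtain ⟨⟨c, d⟩, hcd⟩ := q
  have hw := (isCWitness_cx_cy hC p.1.2 (z * c)).mul_right hz
  have h := simP_of_isCWitness hBi hC (d := d) p.2 (isCWitness_cx_cy hC p.1.2 c) hw
  rwa [mul_assoc] at h

theorem pairMul_congr (hBi : CondBi φ) (hC : CondC φ) {p p' q q' : Sig φ}
    (hp : sim φ p p') (hq : sim φ q q') : sim φ (pairMul hC p q) (pairMul hC p' q') := by
  have E := sim_equivalence hC
  obtain ⟨s, t, hp₁, hp₂, hs, ht, -⟩ := hp
  obtain ⟨s', t', hq₁, hq₂, hs', ht', -⟩ := hq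
  have hpm : p.mulLeft s hs = p'.mulLeft t ht := Subtype.ext (Prod.ext hp₁ hp₂)
  have hqm : q.mulLeft s' hs' = q'.mulLeft t' ht' := Subtype.ext (Prod.ext hq₁ hq₂)
  refine E.trans (sim_pairMul_mulLeft_left hBi hC p q hs) ?_
  refine E.trans ?_ (E.symm (sim_pairMul_mulLeft_left hBi hC p' q' ht))
  rw [hpm]
  exact E.trans (sim_pairMul_mulLeft_right hBi hC _ q hs')
    (hqm ▸ E.symm (sim_pairMul_mulLeft_right hBi hC _ q' ht'))

theorem qmul_cls_cls (hBi : CondBi φ) (hC : CondC φ) (p q : Sig φ) :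
    qmul hC (cls φ p) (cls φ q) = cls φ (pairMul hC p q) :=
  (cls_eq_iff hC).mpr (pairMul_congr hBi hC (sim_out_cls hC p) (sim_out_cls hC q))

theorem qinv_cls (hC : CondC φ) (p : Sig φ) : qinv (cls φ p) = cls φ p.swap :=
  (cls_eq_iff hC).mpr (sim_swap (sim_out_cls hC p))

theorem sim_pairMul_swap_thetaRep (hC : CondC φ) (p : Sig φ) :
    sim φ (pairMul hC (thetaRep hC p.1.1).swap (thetaRep hC p.1.2)) p := by
  obtain ⟨⟨a, b⟩, hab : rr φ a = rr φ b⟩ := p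
  have ha := ll_cx_self hC a
  have hb := ll_cx_self hC b
  obtain ⟨hXY, -, hX, -⟩ := isCWitness_cx_cy hC (cx hC a a) (cx hC b b)
  set X := cx hC (cx hC a a) (cx hC b b)
  set Y := cy hC (cx hC a a) (cx hC b b)
  have hz : ll φ (X * cx hC a a) = rr φ a := by rw [ll_mul_of_le (by omega), ha]
  show simP φ (X * (cx hC a a * a), Y * (cx hC b b * b)) (a, b)
  rw [← mul_assoc, ← mul_assoc, ← hXY]
  exact simP_symm (simP_mul_left hC hz)

theorem cls_eq_qmul_qinv_theta (hBi : CondBi φ) (hC : CondC φ) (p : Sig φ) :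
    cls φ p = qmul hC (qinv (theta hC p.1.1)) (theta hC p.1.2) := by
  change _ = qmul hC (qinv (cls φ (thetaRep hC p.1.1))) (cls φ (thetaRep hC p.1.2))
  rw [qinv_cls hC, qmul_cls_cls hBi hC]
  exact ((cls_eq_iff hC).mpr (sim_pairMul_swap_thetaRep hC p)).symm

end Semigroup

theorem stmt19_general {S : Type*} [Semigroup S] (φ : S →ₙ* Bicyclic)
    (hBi : CondBi φ) (hC : CondC φ) :
    (∀ p : Sig φ,
      cls φ p = qmul hC (qinv (theta hC p.1.1)) (theta hC p.1.2)) ∧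
    (∀ u : QT φ, ∃ a b : S,
      u = qmul hC (qinv (theta hC a)) (theta hC b)) :=
  ⟨cls_eq_qmul_qinv_theta hBi hC, fun u =>
    ⟨_, _, (Quot.out_eq u).symm.trans (cls_eq_qmul_qinv_theta hBi hC u.out)⟩⟩

/-- Every element of `Q` is `(a θ)⁻¹ (b θ)`; indeed `[a,b] = (a θ)⁻¹ (b θ)`,
so `θ(S)` is a left I-order in `Q`. -/
theorem stmt19 {S : Type*} [Semigroup S] (φ : S →ₙ* Bicyclic)
    (hA : CondA φ) (hBi : CondBi φ) (hBii : CondBii φ) (hC : CondC φ) :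
    (∀ p : Sig φ,
      cls φ p = qmul hC (qinv (theta hC p.1.1)) (theta hC p.1.2)) ∧
    (∀ u : QT φ, ∃ a b : S,
      u = qmul hC (qinv (theta hC a)) (theta hC b)) :=
  stmt19_general φ hBi hC
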